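/- arXiv:2004.03515 — 2 statements merged into one kernel-verified Lean document; each statement's English description precedes it below -/
import Mathlib

section
/- Under the distribution D' that assigns weight proportional to m on positively-labeled points and unit weight on negatively-labeled points of an m-point set, if two Boolean classifiers c and c* satisfy p_{c*} = p_c (equal total D'-mass of positively-labeled points), then c and c* agree on all m points. -/
open Finset

/-- Under the reweighted distribution `D'` (weight `m` on positives of `c`, weight `1`
on negatives), if `p_{c*} = p_c` then `c*` agrees with `c` on every point. -/
theorem llp_equal_proportion_implies_equal
    {X : Type*} [Fintype X] [DecidableEq X]
    (c cstar : X → Bool) :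
    let m := Fintype.card X
    let k := (Finset.univ.filter fun x => c x = true).card
    let w : X → ℕ := fun x => if c x = true then m else 1
    let p : (X → Bool) → ℝ := fun h =>
      ((Finset.univ.filter fun x => h x = true).sum fun x => (w x : ℝ)) /
        ((k : ℝ) * m + m - k)
    p cstar = p c → ∀ x : X, cstar x = c x := by
  intro m k w p hp x
  have hm : 0 < m := Fintype.card_pos_iff.mpr ⟨x⟩
  set P := (Finset.univ.filter fun y => c y = true) with hP
  set A := (Finset.univ.filter fun y => cstar y = true) with hA
  have hkm : k ≤ m := by
    simpa using Finset.card_filter_le Finset.univ (fun y => c y = true)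
  have hdenom : ((k : ℝ) * m + m - k) ≠ 0 := by
    have h1 : (k : ℝ) ≤ m := by exact_mod_cast hkm
    have h2 : (1 : ℝ) ≤ m := by exact_mod_cast hm
    have h3 : (0 : ℝ) ≤ k := by positivity
    nlinarith
  have hsum : (A.sum fun y => (w y : ℝ)) = P.sum fun y => (w y : ℝ) :=
    (div_left_inj' hdenom).mp hp
  have hsumN : A.sum w = P.sum w := by exact_mod_cast hsum
  -- compute P.sum w
  have hPsum : P.sum w = m * k := by
    have h : ∀ y ∈ P, w y = m := by
      intro y hy
      simp only [hP, Finset.mem_filter] at hy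
      simp [w, hy.2]
    rw [Finset.sum_congr rfl h, Finset.sum_const, smul_eq_mul, mul_comm]
  have hsplit : ((A ∩ P).sum w) + ((A \ P).sum w) = A.sum w :=
    Finset.sum_inter_add_sum_sdiff A P w
  have hAP : (A ∩ P).sum w = m * (A ∩ P).card := by
    have h : ∀ y ∈ A ∩ P, w y = m := by
      intro y hy
      simp only [hP, Finset.mem_inter, Finset.mem_filter] at hy
      simp [w, hy.2.2]
    rw [Finset.sum_congr rfl h, Finset.sum_const, smul_eq_mul, mul_comm]
  have hAD : (A \ P).sum w = (A \ P).card := by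
    have h : ∀ y ∈ A \ P, w y = 1 := by
      intro y hy
      simp only [hP, Finset.mem_sdiff, Finset.mem_filter] at hy
      have hc : c y = false := by
        rcases Bool.eq_false_or_eq_true (c y) with h | h
        · exact absurd ⟨Finset.mem_univ y, h⟩ hy.2
        · exact h
      simp [w, hc]
    rw [Finset.sum_congr rfl h, Finset.sum_const, smul_eq_mul, mul_one]
  set a := (A ∩ P).card with ha'
  set b := (A \ P).card with hb'
  have heq : m * a + b = m * k := by
    rw [← hAP, ← hAD, hsplit, hsumN, hPsum]
  have hak : a ≤ k := Finset.card_le_card Finset.inter_subset_right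
  have hbk : b ≤ m - k := by
    have hsub : A \ P ⊆ Finset.univ \ P := Finset.sdiff_subset_sdiff (Finset.subset_univ A) le_rfl
    have := Finset.card_le_card hsub
    rwa [Finset.card_sdiff_of_subset (Finset.subset_univ P), Finset.card_univ] at this
  have ha : a = k := by
    by_contra hne
    have hlt : a < k := lt_of_le_of_ne hak hne
    have : m * (a + 1) ≤ m * k := Nat.mul_le_mul_left m hlt
    rw [Nat.mul_succ] at this
    omega
  have hb : b = 0 := by
    rw [ha] at heq
    omega
  have hAPeq : A ∩ P = P :=
    Finset.eq_of_subset_of_card_le Finset.inter_subset_right (le_of_eq (by rw [← ha', ha]))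
  have hAsub : A ⊆ P := Finset.sdiff_eq_empty_iff_subset.mp (Finset.card_eq_zero.mp hb)
  have hfin : A = P := Finset.Subset.antisymm hAsub (hAPeq ▸ Finset.inter_subset_left)
  have hx : x ∈ A ↔ x ∈ P := by rw [hfin]
  simp only [hA, hP, Finset.mem_filter, Finset.mem_univ, true_and] at hx
  rcases Bool.eq_false_or_eq_true (cstar x) with h | h <;>
    rcases Bool.eq_false_or_eq_true (c x) with h2 | h2 <;> simp_all
end

section
/- In the reduction from Exact Cover by 3-Sets to Exact Partial Set Cover: given a universe U with |U| = 3t and 3-element subsets s_1,…,s_r, augment each s_i with ℓ fresh auxiliary elements z_{i,1},…,z_{i,ℓ} where ℓ > |U|, and set k = |U| + ℓt. Then there exists an exact cover of U by t of the s_i if and only if there exists a subfamily of the augmented sets whose union has size exactly k. -/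
open Finset

lemma x3c_key {U : Type*} [Fintype U] [DecidableEq U] {r ℓ : ℕ}
    (s : Fin r → Finset U)
    (s' : Fin r → Finset (U ⊕ Fin r × Fin ℓ))
    (hs' : ∀ i, s' i =
      (s i).image Sum.inl ∪ Finset.univ.image (fun j : Fin ℓ => Sum.inr (i, j)))
    (T : Finset (Fin r)) :
    (T.biUnion s').card = (T.biUnion s).card + ℓ * T.card := by
  have h1 : T.biUnion s' = ((T.biUnion s).image Sum.inl) ∪
      (T.biUnion (fun i => Finset.univ.image fun j : Fin ℓ => Sum.inr (i, j))) := by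
    ext x
    simp only [hs', Finset.mem_biUnion, Finset.mem_union, Finset.mem_image]
    constructor
    · rintro ⟨i, hi, h | h⟩
      · exact Or.inl (by rcases h with ⟨a, ha, rfl⟩; exact ⟨a, ⟨i, hi, ha⟩, rfl⟩)
      · exact Or.inr ⟨i, hi, h⟩
    · rintro (⟨a, ⟨i, hi, ha⟩, rfl⟩ | ⟨i, hi, h⟩)
      · exact ⟨i, hi, Or.inl ⟨a, ha, rfl⟩⟩
      · exact ⟨i, hi, Or.inr h⟩
  have hinj : ∀ i : Fin r, Function.Injective (fun j : Fin ℓ => (Sum.inr (i, j) : U ⊕ Fin r × Fin ℓ)) := by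
    intro i a b h; simpa using h
  have hdisj : ∀ a ∈ T, ∀ b ∈ T, a ≠ b →
      Disjoint (Finset.univ.image fun j : Fin ℓ => (Sum.inr (a, j) : U ⊕ Fin r × Fin ℓ))
        (Finset.univ.image fun j : Fin ℓ => Sum.inr (b, j)) := by
    intro a _ b _ hab
    simp only [Finset.disjoint_left, Finset.mem_image, Finset.mem_univ, true_and]
    rintro x ⟨j, rfl⟩ ⟨j', hj'⟩
    simp only [Sum.inr.injEq, Prod.mk.injEq] at hj'
    exact hab hj'.1.symm
  have h2 : (T.biUnion (fun i => Finset.univ.image fun j : Fin ℓ => (Sum.inr (i, j) : U ⊕ Fin r × Fin ℓ))).card = ℓ * T.card := by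
    rw [Finset.card_biUnion hdisj]
    have hc : ∀ i ∈ T, (Finset.univ.image fun j : Fin ℓ => (Sum.inr (i, j) : U ⊕ Fin r × Fin ℓ)).card = ℓ := by
      intro i _
      rw [Finset.card_image_of_injective _ (hinj i), Finset.card_univ, Fintype.card_fin]
    rw [Finset.sum_congr rfl hc, Finset.sum_const, smul_eq_mul, mul_comm]
  have h3 : Disjoint ((T.biUnion s).image (Sum.inl : U → U ⊕ Fin r × Fin ℓ))
      (T.biUnion (fun i => Finset.univ.image fun j : Fin ℓ => Sum.inr (i, j))) := by
    simp only [Finset.disjoint_left, Finset.mem_image, Finset.mem_biUnion, Finset.mem_univ,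
      true_and]
    rintro x ⟨a, _, rfl⟩ ⟨i, _, j, h⟩
    exact absurd h (by simp)
  rw [h1, Finset.card_union_of_disjoint h3,
    Finset.card_image_of_injective _ Sum.inl_injective, h2]

/-- Reduction from Exact Cover by 3-Sets to Exact Partial Set Cover: augmenting each
3-set `sᵢ ⊆ U` (`|U| = 3t`) with `ℓ > |U|` fresh private auxiliary elements, there is
an exact cover of `U` by `t` of the `sᵢ` iff some subfamily of the augmented sets has
union of size exactly `|U| + ℓt`. -/
theorem x3c_to_exact_partial_set_cover
    {U : Type*} [Fintype U] [DecidableEq U]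
    (t ℓ r : ℕ) (hU : Fintype.card U = 3 * t) (hℓ : Fintype.card U < ℓ)
    (s : Fin r → Finset U) (hs : ∀ i, (s i).card = 3)
    (s' : Fin r → Finset (U ⊕ Fin r × Fin ℓ))
    (hs' : ∀ i, s' i =
      (s i).image Sum.inl ∪ Finset.univ.image (fun j : Fin ℓ => Sum.inr (i, j))) :
    (∃ T : Finset (Fin r), (T.biUnion s').card = Fintype.card U + ℓ * t) ↔
    (∃ T : Finset (Fin r), T.card = t ∧ T.biUnion s = Finset.univ) := by
  constructor
  · rintro ⟨T, hT⟩
    rw [x3c_key s s' hs' T] at hT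
    set A := (T.biUnion s).card with hA
    have hAle : A ≤ 3 * t := by
      rw [← hU]; exact (Finset.card_le_card (Finset.subset_univ _)).trans_eq Finset.card_univ
    rw [hU] at hT hℓ
    -- T.card = t
    have hct : T.card = t := by
      have h1 : T.card ≤ t := by
        by_contra h
        push_neg at h
        have : ℓ * (t + 1) ≤ ℓ * T.card := Nat.mul_le_mul_left _ h
        have : ℓ * t + ℓ ≤ 3 * t + ℓ * t := by
          calc ℓ * t + ℓ = ℓ * (t + 1) := by ring
            _ ≤ ℓ * T.card := this
            _ ≤ A + ℓ * T.card := Nat.le_add_left _ _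
            _ = 3 * t + ℓ * t := hT
        omega
      have h2 : t ≤ T.card := by
        by_contra h
        push_neg at h
        have : ℓ * (T.card + 1) ≤ ℓ * t := Nat.mul_le_mul_left _ h
        have : ℓ * T.card + ℓ ≤ A + ℓ * T.card := by
          calc ℓ * T.card + ℓ = ℓ * (T.card + 1) := by ring
            _ ≤ ℓ * t := this
            _ ≤ 3 * t + ℓ * t := Nat.le_add_left _ _
            _ = A + ℓ * T.card := hT.symm
        omega
      omega
    rw [hct] at hT
    have hAeq : A = 3 * t := by omega
    refine ⟨T, hct, Finset.eq_univ_of_card _ (by rw [← hA, hAeq, hU])⟩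
  · rintro ⟨T, hTc, hTu⟩
    refine ⟨T, ?_⟩
    rw [x3c_key s s' hs' T, hTu, hTc, Finset.card_univ]
end
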